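/- Let G be a finite connected multigraph with spanning tree T, let e' be an edge of G not in T, let ℓ be the fundamental path of e' in T, and let e be an edge of ℓ. Then the spanning tree (T \ {e}) ∪ {e'} can be obtained from T by a finite sequence of single-edge exchanges, each of which swaps one tree edge with one non-tree edge sharing a vertex with it while preserving the spanning tree property. -/

import Mathlib

/-- A finite multigraph on vertex type `V` with edge type `E`:
each edge has an unordered pair of endpoints (a loop has equal endpoints). -/
structure Multigraph (V E : Type) where
  ends : E → Sym2 V

namespace Multigraph

variable {V E : Type}

/-- Degree of a vertex: number of edge-ends at it (a loop counts twice). -/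
def deg [Fintype E] [DecidableEq V] (G : Multigraph V E) (v : V) : ℕ :=
  ∑ e : E, (if G.ends e = s(v, v) then 2 else if v ∈ G.ends e then 1 else 0)

/-- Degree of a vertex within a set of edges. -/
def degOn [DecidableEq V] (G : Multigraph V E) (S : Finset E) (v : V) : ℕ :=
  ∑ e ∈ S, (if G.ends e = s(v, v) then 2 else if v ∈ G.ends e then 1 else 0)

/-- Two vertices are joined by a walk using only edges in `S`. -/
def Reach (G : Multigraph V E) (S : Finset E) : V → V → Prop :=
  Relation.ReflTransGen (fun u w => ∃ e ∈ S, G.ends e = s(u, w))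

/-- A set of edges connects all the vertices of `G`. -/
def ConnectedOn (G : Multigraph V E) (S : Finset E) : Prop :=
  ∀ u v : V, G.Reach S u v

/-- `G` is connected (as a graph, using all its edges). -/
def Connected [Fintype E] (G : Multigraph V E) : Prop :=
  G.ConnectedOn Finset.univ

/-- A set of edges is acyclic iff every edge in it is a bridge: its endpoints
are not joined by a walk avoiding it.  (In particular it has no loops.) -/
def Acyclic [DecidableEq E] (G : Multigraph V E) (S : Finset E) : Prop :=
  ∀ e ∈ S, ∀ u w : V, G.ends e = s(u, w) → ¬ G.Reach (S.erase e) u w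

/-- A spanning tree: a connected acyclic spanning set of edges. -/
def IsSpanningTree [DecidableEq E] (G : Multigraph V E) (T : Finset E) : Prop :=
  G.ConnectedOn T ∧ G.Acyclic T

/-- `G` is 4-valent: every vertex has degree 4. -/
def IsFourValent [Fintype E] [DecidableEq V] (G : Multigraph V E) : Prop :=
  ∀ v : V, G.deg v = 4

lemma reach_symm (G : Multigraph V E) (S : Finset E) :
    Symmetric (G.Reach S) := by
  intro u w h
  induction h with
  | refl => exact Relation.ReflTransGen.refl
  | tail _ hst ih =>
    obtain ⟨e, he, hew⟩ := hst
    exact Relation.ReflTransGen.head ⟨e, he, hew.trans (Sym2.eq_swap)⟩ ih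

/-- Reachability through `S` as an equivalence relation on vertices. -/
def reachSetoid (G : Multigraph V E) (S : Finset E) : Setoid V :=
  ⟨G.Reach S, ⟨fun _ => Relation.ReflTransGen.refl,
    fun h => G.reach_symm S h, fun h h' => Relation.ReflTransGen.trans h h'⟩⟩

/-- Number of connected components of the subgraph with edge set `S`
(every vertex of `G` counts). -/
noncomputable def numComponents (G : Multigraph V E) (S : Finset E) : ℕ :=
  Nat.card (Quotient (G.reachSetoid S))

end Multigraph

namespace Multigraph

/-- `P` is the edge set of a simple path from `u` to `v`: either trivial
(`u = v`, no edges) or `u ≠ v`, with `u`, `v` of degree 1 in `P`, all other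
vertices of degree 0 or 2 in `P`, `P` acyclic and connected onto `u`. -/
def IsPath {V E : Type} [DecidableEq V] [DecidableEq E]
    (G : Multigraph V E) (P : Finset E) (u v : V) : Prop :=
  (u = v ∧ P = ∅) ∨
    (u ≠ v ∧ G.degOn P u = 1 ∧ G.degOn P v = 1 ∧
      (∀ w : V, w ≠ u → w ≠ v → G.degOn P w = 0 ∨ G.degOn P w = 2) ∧
      G.Acyclic P ∧ (∀ w : V, G.degOn P w ≠ 0 → G.Reach P u w))

/-- A single-edge exchange: replace a tree edge `a` by a non-tree edge `b`
sharing a vertex with it, the result being again a spanning tree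
(the move (m2) of the paper). -/
def ExchangeStep {V E : Type} [DecidableEq V] [DecidableEq E]
    (G : Multigraph V E) (T T' : Finset E) : Prop :=
  ∃ a b : E, ∃ w : V, a ∈ T ∧ b ∉ T ∧ w ∈ G.ends a ∧ w ∈ G.ends b ∧
    T' = insert b (T.erase a) ∧ G.IsSpanningTree T ∧ G.IsSpanningTree T'

end Multigraph

/-!
Write the fundamental path `P` as a trail `f₁, …, fₖ` from `u` to `v` inside `T`. Since `T`
is acyclic, each `fᵢ` separates `u` from `v` in `T`, so `Tᵢ = T - fᵢ + e'` is again a spanning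
tree. Then `T → T₁` exchanges `f₁` for `e'` (both contain `u`) and `Tᵢ → Tᵢ₊₁` exchanges `fᵢ₊₁`
for `fᵢ` (they share a vertex); stopping at `e = fᵢ` gives the claim.

The trail is read off the degree description of `P` one edge at a time: removing the edge at `u`
moves the odd-degree endpoint from `u` to the other end of that edge. The recursion stops because
a nonempty acyclic edge set `S` has a vertex of odd degree: the degrees, summed over the component
of one end of an edge `f` in `S - f`, count `f` exactly once.
-/

namespace Multigraph

variable {V E : Type} {G : Multigraph V E}

lemma exists_ends (G : Multigraph V E) (f : E) : ∃ p q : V, G.ends f = s(p, q) :=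
  Sym2.ind (f := fun z => ∃ p q : V, z = s(p, q)) (fun p q => ⟨p, q, rfl⟩) (G.ends f)

lemma reach_of_mk_eq {S : Finset E} {p q p' q' : V} (h : s(p, q) = s(p', q'))
    (hr : G.Reach S p q) : G.Reach S p' q' := by
  rcases Sym2.eq_iff.mp h with ⟨rfl, rfl⟩ | ⟨rfl, rfl⟩
  · exact hr
  · exact G.reach_symm S hr

lemma reach_of_mem {S : Finset E} {f : E} {p q : V} (hf : f ∈ S) (h : G.ends f = s(p, q)) :
    G.Reach S p q :=
  .single ⟨f, hf, h⟩

lemma reach_mono {S S' : Finset E} (h : S ⊆ S') {x y : V} (hr : G.Reach S x y) :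
    G.Reach S' x y :=
  Relation.ReflTransGen.mono (fun _ _ ⟨f, hf, he⟩ => ⟨f, h hf, he⟩) _ _ hr

def WalkList (G : Multigraph V E) : V → List E → V → Prop
  | x, [], y => x = y
  | x, f :: L, y => ∃ w, G.ends f = s(x, w) ∧ WalkList G w L y

lemma walkList_reach {S : Finset E} {L : List E} (hLS : ∀ f ∈ L, f ∈ S) {x y : V}
    (h : G.WalkList x L y) : G.Reach S x y := by
  induction L generalizing x with
  | nil => exact h ▸ .refl
  | cons f L ih =>
    obtain ⟨w, hf, hw⟩ := h
    exact .head ⟨f, hLS f List.mem_cons_self, hf⟩ (ih (fun g hg => hLS g (.tail _ hg)) hw)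

lemma walkList_append {A B : List E} {x y : V} (h : G.WalkList x (A ++ B) y) :
    ∃ w, G.WalkList x A w ∧ G.WalkList w B y := by
  induction A generalizing x with
  | nil => exact ⟨x, rfl, h⟩
  | cons f A ih =>
    obtain ⟨w, hf, hw⟩ := h
    obtain ⟨w', hA, hB⟩ := ih hw
    exact ⟨w', ⟨w, hf, hA⟩, hB⟩

section Exchange

variable [DecidableEq E]

lemma reach_insert_cases {S : Finset E} {g : E} {x y : V} (h : G.Reach (insert g S) x y) :
    G.Reach S x y ∨ ∃ p q : V, G.ends g = s(p, q) ∧ G.Reach S x p ∧ G.Reach S q y := by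
  induction h using Relation.ReflTransGen.head_induction_on with
  | refl => exact .inl .refl
  | @head a c hstep _ ih =>
    obtain ⟨f, hf, hac⟩ := hstep
    rcases Finset.mem_insert.mp hf with rfl | hfS
    · rcases ih with hcy | ⟨p, q, hpq, hcp, hqy⟩
      · exact .inr ⟨a, c, hac, .refl, hcy⟩
      · rcases Sym2.eq_iff.mp (hac.symm.trans hpq) with ⟨rfl, rfl⟩ | ⟨rfl, rfl⟩
        · exact .inr ⟨a, c, hac, .refl, hqy⟩
        · exact .inl hqy
    · have hac' : G.Reach S a c := reach_of_mem hfS hac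
      rcases ih with hcy | ⟨p, q, hpq, hcp, hqy⟩
      · exact .inl (hac'.trans hcy)
      · exact .inr ⟨p, q, hpq, hac'.trans hcp, hqy⟩

lemma reach_of_subset_insert {S S' : Finset E} {f : E} (hsub : S ⊆ insert f S')
    (hf : ∀ p q : V, G.ends f = s(p, q) → G.Reach S' p q) {x y : V} (h : G.Reach S x y) :
    G.Reach S' x y := by
  rcases reach_insert_cases (reach_mono hsub h) with h' | ⟨p, q, hpq, hxp, hqy⟩
  · exact h'
  · exact hxp.trans ((hf p q hpq).trans hqy)

lemma ConnectedOn.insert_erase {T : Finset E} (hT : G.ConnectedOn T) {e' f : E} {u v : V}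
    (hends : G.ends e' = s(u, v)) (hsep : ¬ G.Reach (T.erase f) u v) :
    G.ConnectedOn (insert e' (T.erase f)) := by
  have hsub : T.erase f ⊆ insert e' (T.erase f) := Finset.subset_insert _ _
  obtain ⟨p, q, hpq, hup, hqv⟩ :=
    (reach_insert_cases (reach_mono (Finset.insert_erase_subset f T) (hT u v))).resolve_left hsep
  have hpq' : G.Reach (insert e' (T.erase f)) p q :=
    (G.reach_symm _ (reach_mono hsub hup)).trans
      ((reach_of_mem (Finset.mem_insert_self _ _) hends).trans
        (G.reach_symm _ (reach_mono hsub hqv)))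
  intro x y
  refine reach_of_subset_insert (f := f) ?_ ?_ (hT x y)
  · exact (Finset.insert_erase_subset f T).trans (Finset.insert_subset_insert _ hsub)
  · exact fun p' q' h => reach_of_mk_eq (hpq.symm.trans h) hpq'

lemma Acyclic.insert_erase {T : Finset E} (hT : G.Acyclic T) {e' f : E} {u v : V}
    (hends : G.ends e' = s(u, v)) (hsep : ¬ G.Reach (T.erase f) u v) :
    G.Acyclic (insert e' (T.erase f)) := by
  have he' : e' ∉ T.erase f := fun h => hsep (reach_of_mem h hends)
  intro g hg a b hab hr
  rcases Finset.mem_insert.mp hg with rfl | hgT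
  · rw [Finset.erase_insert he'] at hr
    exact hsep (reach_of_mk_eq (hab.symm.trans hends) hr)
  have hge' : g ≠ e' := fun h => he' (h ▸ hgT)
  rw [Finset.erase_insert_of_ne (Ne.symm hge')] at hr
  have hsub : (T.erase f).erase g ⊆ T.erase f := Finset.erase_subset _ _
  rcases reach_insert_cases hr with hab' | ⟨p, q, hpq, hap, hqb⟩
  · refine hT g (Finset.mem_of_mem_erase hgT) a b hab (reach_mono ?_ hab')
    exact Finset.erase_subset_erase _ (Finset.erase_subset _ _)
  · have hpq' : G.Reach (T.erase f) p q :=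
      (G.reach_symm _ (reach_mono hsub hap)).trans
        ((reach_of_mem hgT hab).trans (G.reach_symm _ (reach_mono hsub hqb)))
    exact hsep (reach_of_mk_eq (hpq.symm.trans hends) hpq')

theorem IsSpanningTree.insert_erase {T : Finset E} (hT : G.IsSpanningTree T) {e' f : E}
    {u v : V} (hends : G.ends e' = s(u, v)) (hsep : ¬ G.Reach (T.erase f) u v) :
    G.IsSpanningTree (insert e' (T.erase f)) :=
  ⟨hT.1.insert_erase hends hsep, hT.2.insert_erase hends hsep⟩

lemma Acyclic.subset {S S' : Finset E} (h : G.Acyclic S) (hsub : S' ⊆ S) : G.Acyclic S' :=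
  fun f hf p q hpq hr =>
    h f (hsub hf) p q hpq (reach_mono (Finset.erase_subset_erase _ hsub) hr)

lemma Acyclic.not_reach_erase_of_mem_walkList {T : Finset E} (hT : G.Acyclic T) {L : List E}
    (hnd : L.Nodup) (hLT : ∀ g ∈ L, g ∈ T) {u v : V} (hw : G.WalkList u L v) {f : E}
    (hf : f ∈ L) : ¬ G.Reach (T.erase f) u v := by
  obtain ⟨L₁, L₂, rfl⟩ := List.append_of_mem hf
  obtain ⟨w₁, hw₁, w₂, hends, hw₂⟩ := walkList_append hw
  have hf' : f ∉ L₁ ++ L₂ := (List.nodup_cons.mp (List.nodup_middle.mp hnd)).1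
  have hsub : ∀ g ∈ L₁ ++ L₂, g ∈ T.erase f := fun g hg =>
    Finset.mem_erase.mpr ⟨fun h => hf' (h ▸ hg),
      hLT g (by rcases List.mem_append.mp hg with h | h <;> simp [h])⟩
  intro huv
  refine hT f (hLT f hf) w₁ w₂ hends ((G.reach_symm _ ?_).trans (huv.trans (G.reach_symm _ ?_)))
  · exact walkList_reach (fun g hg => hsub g (List.mem_append_left _ hg)) hw₁
  · exact walkList_reach (fun g hg => hsub g (List.mem_append_right _ hg)) hw₂

lemma exchangeStep_insert_erase [DecidableEq V] {T : Finset E} {e' f g : E} {w : V}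
    (he' : e' ∉ T) (hg : g ∈ T) (hf : f ∈ T) (hfg : f ≠ g) (hwg : w ∈ G.ends g)
    (hwf : w ∈ G.ends f) (hTg : G.IsSpanningTree (insert e' (T.erase g)))
    (hTf : G.IsSpanningTree (insert e' (T.erase f))) :
    G.ExchangeStep (insert e' (T.erase g)) (insert e' (T.erase f)) := by
  have hge' : g ≠ e' := fun h => he' (h ▸ hg)
  refine ⟨f, g, w, by simp [hf, hfg], by simp [hge'], hwf, hwg, ?_, hTg, hTf⟩
  ext x
  simp only [Finset.mem_insert, Finset.mem_erase]
  grind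

lemma reflTransGen_exchangeStep_of_walkList [DecidableEq V] {T : Finset E} {e' : E}
    (he' : e' ∉ T) {v : V} {L : List E} :
    ∀ {g : E} {w : V}, (g :: L).Nodup →
      (∀ f ∈ g :: L, f ∈ T ∧ G.IsSpanningTree (insert e' (T.erase f))) →
      w ∈ G.ends g → G.WalkList w L v → ∀ e ∈ g :: L,
      Relation.ReflTransGen G.ExchangeStep (insert e' (T.erase g)) (insert e' (T.erase e)) := by
  induction L with
  | nil =>
    intro g w _ _ _ _ e he
    rw [List.mem_singleton.mp he]
  | cons f L ih =>
    intro g w hnd hswap hwg hwalk e he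
    rcases List.mem_cons.mp he with rfl | he
    · exact .refl
    obtain ⟨w', hends, hwalk'⟩ := hwalk
    have hfg : f ≠ g := fun h => (List.nodup_cons.mp hnd).1 (h ▸ List.mem_cons_self)
    obtain ⟨hg, hTg⟩ := hswap g List.mem_cons_self
    obtain ⟨hf, hTf⟩ := hswap f (.tail _ List.mem_cons_self)
    have hstep :=
      exchangeStep_insert_erase he' hg hf hfg hwg (hends ▸ Sym2.mem_mk_left w w') hTg hTf
    exact .head hstep (ih (List.nodup_cons.mp hnd).2 (fun f' hf' => hswap f' (.tail _ hf'))
      (hends ▸ Sym2.mem_mk_right w w') hwalk' e he)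

end Exchange

section Degree

variable [DecidableEq V]

def incidence (G : Multigraph V E) (f : E) (x : V) : ℕ :=
  if G.ends f = s(x, x) then 2 else if x ∈ G.ends f then 1 else 0

lemma degOn_eq_sum_incidence (G : Multigraph V E) (S : Finset E) (x : V) :
    G.degOn S x = ∑ f ∈ S, G.incidence f x :=
  rfl

lemma incidence_eq {f : E} {p q : V} (h : G.ends f = s(p, q)) (x : V) :
    G.incidence f x = (if x = p then 1 else 0) + (if x = q then 1 else 0) := by
  unfold incidence
  rw [h]
  grind [Sym2.eq_iff]

lemma mem_ends_of_incidence_ne_zero {f : E} {x : V} (h : G.incidence f x ≠ 0) :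
    x ∈ G.ends f := by
  unfold incidence at h
  split_ifs at h with hloop hx
  · exact hloop ▸ Sym2.mem_mk_left x x
  · exact hx
  · exact absurd rfl h

lemma even_sum_degOn_of_closed (S : Finset E) (A : Finset V)
    (hA : ∀ g ∈ S, ∀ p q : V, G.ends g = s(p, q) → (p ∈ A ↔ q ∈ A)) :
    Even (∑ x ∈ A, G.degOn S x) := by
  simp only [degOn_eq_sum_incidence]
  rw [Finset.sum_comm]
  refine Finset.even_sum _ fun g hg => ?_
  obtain ⟨p, q, hpq⟩ := G.exists_ends g
  simp only [incidence_eq hpq, Finset.sum_add_distrib, Finset.sum_ite_eq', hA g hg p q hpq]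
  split <;> simp

variable [DecidableEq E]

lemma degOn_erase (G : Multigraph V E) {S : Finset E} {f : E} (hf : f ∈ S) (x : V) :
    G.degOn S x = G.degOn (S.erase f) x + G.incidence f x :=
  (Finset.sum_erase_add _ _ hf).symm

lemma eq_empty_of_acyclic_of_even [Fintype V] {S : Finset E} (hS : G.Acyclic S)
    (heven : ∀ x, Even (G.degOn S x)) : S = ∅ := by
  classical
  by_contra hne
  obtain ⟨f, hf⟩ := Finset.nonempty_iff_ne_empty.mpr hne
  obtain ⟨p, q, hpq⟩ := G.exists_ends f
  let A := Finset.univ.filter (G.Reach (S.erase f) p)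
  have hclosed : ∀ g ∈ S.erase f, ∀ a b : V, G.ends g = s(a, b) → (a ∈ A ↔ b ∈ A) :=
    fun g hg a b hab => by
      simp only [A, Finset.mem_filter, Finset.mem_univ, true_and]
      exact ⟨fun h => h.trans (reach_of_mem hg hab),
        fun h => h.trans (G.reach_symm _ (reach_of_mem hg hab))⟩
  -- `p ∈ A` but `q ∉ A`, as `f` is a bridge of `S`.
  have hsum : ∑ x ∈ A, G.degOn S x = ∑ x ∈ A, G.degOn (S.erase f) x + 1 := by
    simp only [G.degOn_erase hf, incidence_eq hpq, Finset.sum_add_distrib, Finset.sum_ite_eq']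
    have hpp : G.Reach (S.erase f) p p := .refl
    simp [A, hpp, hS f hf p q hpq]
  have hodd : Odd (∑ x ∈ A, G.degOn S x) :=
    hsum ▸ (even_sum_degOn_of_closed _ A hclosed).add_one
  exact Nat.not_even_iff_odd.mpr hodd (Finset.even_sum _ fun x _ => heven x)

lemma IsPath.acyclic {P : Finset E} {u v : V} (hP : G.IsPath P u v) : G.Acyclic P := by
  rcases hP with ⟨-, rfl⟩ | ⟨-, -, -, -, hac, -⟩
  · simp [Acyclic]
  · exact hac

lemma IsPath.odd_degOn_iff {P : Finset E} {u v : V} (hP : G.IsPath P u v) (w : V) :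
    Odd (G.degOn P w) ↔ Xor (w = u) (w = v) := by
  rcases hP with ⟨rfl, rfl⟩ | ⟨huv, hu, hv, hdeg, -, -⟩
  · simp [degOn]
  rcases eq_or_ne w u with rfl | hwu
  · simp [hu, huv]
  rcases eq_or_ne w v with rfl | hwv
  · simp [hv, hwu]
  rcases hdeg w hwu hwv with h | h <;> simp [h, hwu, hwv, Nat.odd_iff]

lemma odd_degOn_erase_iff {P : Finset E} {f : E} (hf : f ∈ P) {u u₁ v : V}
    (hends : G.ends f = s(u, u₁)) (hodd : ∀ w, Odd (G.degOn P w) ↔ Xor (w = u) (w = v))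
    (w : V) : Odd (G.degOn (P.erase f) w) ↔ Xor (w = u₁) (w = v) := by
  have h := hodd w
  rw [G.degOn_erase hf, incidence_eq hends] at h
  by_cases h1 : w = u <;> by_cases h2 : w = u₁ <;> by_cases h3 : w = v <;>
    simp_all [parity_simps]

theorem exists_walkList_of_odd_degOn [Fintype V] {P : Finset E} (hP : G.Acyclic P) {u v : V}
    (hodd : ∀ w, Odd (G.degOn P w) ↔ Xor (w = u) (w = v)) :
    ∃ L : List E, L.Nodup ∧ L.toFinset = P ∧ G.WalkList u L v := by
  induction P using Finset.strongInduction generalizing u with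
  | H P ih =>
  rcases eq_or_ne u v with rfl | huv
  · have hP : P = ∅ := eq_empty_of_acyclic_of_even hP fun w => by
      simpa [parity_simps] using hodd w
    exact ⟨[], List.nodup_nil, by simp [hP], rfl⟩
  have hu : G.degOn P u ≠ 0 := ((hodd u).mpr (by simp [huv])).pos.ne'
  obtain ⟨f, hf, hfu⟩ := Finset.exists_ne_zero_of_sum_ne_zero hu
  obtain ⟨u₁, hends⟩ := Sym2.mem_iff_exists.mp (mem_ends_of_incidence_ne_zero hfu)
  obtain ⟨L, hnd, hL, hw⟩ := ih _ (Finset.erase_ssubset hf)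
    (hP.subset (Finset.erase_subset f P)) (odd_degOn_erase_iff hf hends hodd)
  have hfL : f ∉ L := fun h => Finset.notMem_erase f P (hL ▸ List.mem_toFinset.mpr h)
  refine ⟨f :: L, List.nodup_cons.mpr ⟨hfL, hnd⟩, ?_, u₁, hends, hw⟩
  rw [List.toFinset_cons, hL, Finset.insert_erase hf]

end Degree

end Multigraph

theorem stmt_3_general {V E : Type} [Fintype V] [DecidableEq V] [DecidableEq E]
    (G : Multigraph V E)
    (T : Finset E) (hT : G.IsSpanningTree T)
    (e e' : E) (he' : e' ∉ T)
    (u v : V) (hends : G.ends e' = s(u, v))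
    (P : Finset E) (hPT : P ⊆ T) (hP : G.IsPath P u v) (heP : e ∈ P) :
    Relation.ReflTransGen (G.ExchangeStep) T (insert e' (T.erase e)) := by
  obtain ⟨L, hnd, rfl, hwalk⟩ :=
    Multigraph.exists_walkList_of_odd_degOn hP.acyclic hP.odd_degOn_iff
  have hLT : ∀ f ∈ L, f ∈ T := fun f hf => hPT (List.mem_toFinset.mpr hf)
  have hswap : ∀ f ∈ L, f ∈ T ∧ G.IsSpanningTree (insert e' (T.erase f)) := fun f hf =>
    ⟨hLT f hf, hT.insert_erase hends (hT.2.not_reach_erase_of_mem_walkList hnd hLT hwalk hf)⟩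
  have heL : e ∈ L := List.mem_toFinset.mp heP
  obtain ⟨f, L, rfl⟩ := List.exists_cons_of_ne_nil (List.ne_nil_of_mem heL)
  obtain ⟨w, hf, hwalk'⟩ := hwalk
  have hfirst : G.ExchangeStep T (insert e' (T.erase f)) :=
    ⟨f, e', u, (hswap f List.mem_cons_self).1, he', hf ▸ Sym2.mem_mk_left u w,
      hends ▸ Sym2.mem_mk_left u v, rfl, hT, (hswap f List.mem_cons_self).2⟩
  exact .head hfirst (Multigraph.reflTransGen_exchangeStep_of_walkList he' hnd hswap
    (hf ▸ Sym2.mem_mk_right u w) hwalk' e heL)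

/-- The composite exchange `(T \ {e}) ∪ {e'}` along the fundamental path of
`e'` can be realized as a finite sequence of single-edge exchanges, each
swapping a tree edge with an adjacent non-tree edge while preserving the
spanning tree property. -/
theorem stmt_3 {V E : Type} [Fintype V] [Fintype E] [DecidableEq V] [DecidableEq E]
    (G : Multigraph V E) (hconn : G.Connected)
    (T : Finset E) (hT : G.IsSpanningTree T)
    (e e' : E) (he : e ∈ T) (he' : e' ∉ T)
    (u v : V) (hends : G.ends e' = s(u, v))
    (P : Finset E) (hPT : P ⊆ T) (hP : G.IsPath P u v) (heP : e ∈ P) :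
    Relation.ReflTransGen (G.ExchangeStep) T (insert e' (T.erase e)) :=
  stmt_3_general G T hT e e' he' u v hends P hPT hP heP
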